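/- arXiv:0909.0809 — 2 statements merged into one kernel-verified Lean document; each statement's English description precedes it below -/
import Mathlib

section
/- Let $q=2^r$. For each odd integer $n\geq 3$ and all $q$, one has $n(\beta)>0$ for every $\beta\in\mathbb{F}_q$. For $n=1$ and all $q$, one has $n(\beta)=q$ if $\beta=1$, $n(\beta)=2q$ if $\beta\neq 1$ and $tr((\beta-1)^{-1})=0$, and $n(\beta)=0$ if $\beta\neq 1$ and $tr((\beta-1)^{-1})=1$. -/
open scoped BigOperators Classical
open Matrix

noncomputable section

/-- The finite field `F_q` with `q = 2^r` elements. -/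
abbrev Fq (r : ℕ) : Type := GaloisField 2 r

noncomputable instance (r : ℕ) : Fintype (Fq r) := Fintype.ofFinite _

/-- The trace map `tr : F_q → F_2`. -/
noncomputable def tr2 (r : ℕ) (x : Fq r) : ZMod 2 := Algebra.trace (ZMod 2) (Fq r) x

/-- Index type for `(2n+1) × (2n+1)` matrices, split into blocks `n + (n + 1)`. -/
abbrev Idx (n : ℕ) := Fin n ⊕ (Fin n ⊕ Unit)

/-- The quadratic form `θ(x) = ∑_{i=1}^n x_i x_{n+i} + x_{2n+1}²`. -/
def theta (r n : ℕ) (x : Idx n → Fq r) : Fq r :=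
  (∑ i : Fin n, x (Sum.inl i) * x (Sum.inr (Sum.inl i))) + x (Sum.inr (Sum.inr ())) ^ 2

/-- Assemble a `(2n+1) × (2n+1)` matrix `[[A, B, e],[C, D, f],[g, h, c]]` from blocks. -/
def blk {α : Type} {n : ℕ} (A B C D : Matrix (Fin n) (Fin n) α)
    (g h e f : Fin n → α) (c : α) : Matrix (Idx n) (Idx n) α :=
  Matrix.of fun i j =>
    match i, j with
    | Sum.inl i, Sum.inl j => A i j
    | Sum.inl i, Sum.inr (Sum.inl j) => B i j
    | Sum.inl i, Sum.inr (Sum.inr _) => e i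
    | Sum.inr (Sum.inl i), Sum.inl j => C i j
    | Sum.inr (Sum.inl i), Sum.inr (Sum.inl j) => D i j
    | Sum.inr (Sum.inl i), Sum.inr (Sum.inr _) => f i
    | Sum.inr (Sum.inr _), Sum.inl j => g j
    | Sum.inr (Sum.inr _), Sum.inr (Sum.inl j) => h j
    | Sum.inr (Sum.inr _), Sum.inr (Sum.inr _) => c

/-- A square matrix is alternating: symmetric with zero diagonal (characteristic 2). -/
def IsAlt {n : ℕ} {α : Type} [Zero α] (M : Matrix (Fin n) (Fin n) α) : Prop :=
  Mᵀ = M ∧ ∀ i, M i i = 0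

/-- The orthogonal group `O(2n+1, q)`: isometries of the quadratic form `θ`. -/
def OGrp (r n : ℕ) : Set (Matrix (Idx n) (Idx n) (Fq r)) :=
  {w | IsUnit w ∧ ∀ x, theta r n (w.mulVec x) = theta r n x}

/-- The maximal parabolic subgroup `P(2n+1, q)`: all products
`[[A,0,0],[0,ᵗA⁻¹,0],[0,0,1]] * [[1,B,0],[0,1,0],[0,h,1]]` with `A ∈ GL(n,q)` and
`B + ᵗh h` alternating. -/
def Pgrp (r n : ℕ) : Set (Matrix (Idx n) (Idx n) (Fq r)) :=
  {w | ∃ A B h, IsUnit A ∧ IsAlt (B + Matrix.of (fun i j => h i * h j)) ∧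
    w = blk A 0 0 ((A⁻¹)ᵀ) 0 0 0 0 1 * blk 1 B 0 1 0 h 0 0 1}

/-- The matrix `σ_k ∈ O(2n+1, q)` interchanging the first `k` coordinates with
coordinates `n+1, …, n+k`. -/
def sigmaMat (r n k : ℕ) : Matrix (Idx n) (Idx n) (Fq r) :=
  blk (Matrix.of fun i j => if i = j ∧ k ≤ (i : ℕ) then 1 else 0)
      (Matrix.of fun i j => if i = j ∧ (i : ℕ) < k then 1 else 0)
      (Matrix.of fun i j => if i = j ∧ (i : ℕ) < k then 1 else 0)
      (Matrix.of fun i j => if i = j ∧ k ≤ (i : ℕ) then 1 else 0)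
      0 0 0 0 1

/-- The double coset `P σ_k P`. -/
def DCoset (r n k : ℕ) : Set (Matrix (Idx n) (Idx n) (Fq r)) :=
  {w | ∃ p ∈ Pgrp r n, ∃ p' ∈ Pgrp r n, w = p * sigmaMat r n k * p'}

/-- The double coset `P σ_k P` as a finite set. -/
noncomputable def PsPfin (r n k : ℕ) : Finset (Matrix (Idx n) (Idx n) (Fq r)) :=
  (Set.toFinite (DCoset r n k)).toFinset

/-- `DC(n, q) = P σ_{n-1} P`. -/
noncomputable def DCfin (r n : ℕ) : Finset (Matrix (Idx n) (Idx n) (Fq r)) :=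
  PsPfin r n (n - 1)

/-- `n(β)`: the number of `w ∈ DC(n,q)` with matrix trace `β`. -/
noncomputable def nBeta (r n : ℕ) (β : Fq r) : ℕ :=
  ((DCfin r n).filter (fun w => Matrix.trace w = β)).card

/-!
For `n ≥ 2` one element of each trace suffices: `σ_{n-1}` times the element of `P` with
`A = 1`, `h = s e₁`, `B = h ᵗh` has trace `s² + 1`, and squaring is onto in characteristic two.

For `n = 1`, `σ₀ = 1` and `P(3, q)` is a group parametrised by the pairs `(a, h)` with `a ≠ 0`;
the element with parameters `(a, h)` has trace `a + a⁻¹ + 1`, so `n(β)` is `q` times the number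
of roots of `a² - (β - 1) a + 1`. For `β ≠ 1` the substitution `a = (β - 1) y` turns this into
`y² + y = (β - 1)⁻²`, which by additive Hilbert 90 has two roots or none according as
`tr((β - 1)⁻²) = tr((β - 1)⁻¹)` vanishes or not.
-/

open Finset

theorem add_inv_add_one_eq_iff {K : Type*} [Field K] (a β : K) :
    a ≠ 0 ∧ a + a⁻¹ + 1 = β ↔ a ^ 2 - (β - 1) * a + 1 = 0 := by
  constructor
  · rintro ⟨ha, rfl⟩
    field_simp
    ring
  · intro h
    have ha : a ≠ 0 := by rintro rfl; simp at h
    refine ⟨ha, ?_⟩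
    field_simp
    linear_combination h

namespace FiniteField

variable {L : Type*} [Field L] [Algebra (ZMod 2) L]

theorem charP_two_of_algebra : CharP L 2 := charP_of_injective_algebraMap' (ZMod 2) 2

def artinSchreier : L →+ L where
  toFun y := y ^ 2 + y
  map_zero' := by simp
  map_add' x y := by
    have := charP_two_of_algebra (L := L)
    rw [CharTwo.add_sq]
    ring

theorem artinSchreier_apply (y : L) : artinSchreier y = y ^ 2 + y := rfl

theorem ker_artinSchreier : ((artinSchreier (L := L)).ker : Set L) = {0, 1} := by
  have := charP_two_of_algebra (L := L)
  ext y
  simp only [SetLike.mem_coe, AddMonoidHom.mem_ker, artinSchreier_apply, Set.mem_insert_iff,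
    Set.mem_singleton_iff]
  rw [show y ^ 2 + y = y * (y + 1) by ring, mul_eq_zero, CharTwo.add_eq_zero]

variable [Finite L]

theorem trace_sq (x : L) : Algebra.trace (ZMod 2) L (x ^ 2) = Algebra.trace (ZMod 2) L x :=
  Algebra.trace_eq_of_algEquiv (frobeniusAlgEquivOfAlgebraic (ZMod 2) L) x

/-- Additive Hilbert 90 over `ZMod 2`: both sides are subgroups of index two. -/
theorem range_artinSchreier :
    (artinSchreier (L := L)).range = (Algebra.trace (ZMod 2) L).toAddMonoidHom.ker := by
  have := charP_two_of_algebra (L := L)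
  have hle : artinSchreier.range ≤ (Algebra.trace (ZMod 2) L).toAddMonoidHom.ker := by
    rintro _ ⟨y, rfl⟩
    simp [artinSchreier_apply, trace_sq, CharTwo.add_self_eq_zero]
  refine AddSubgroup.eq_of_le_of_card_ge hle (Nat.le_of_eq ?_)
  have hker : Nat.card (artinSchreier (L := L)).ker = 2 := by
    rw [← SetLike.coe_sort_coe, ker_artinSchreier, Nat.card_coe_set_eq,
      Set.ncard_pair zero_ne_one]
  have hrange : Nat.card (Algebra.trace (ZMod 2) L).toAddMonoidHom.range = 2 := by
    rw [AddMonoidHom.range_eq_top.mpr (Algebra.trace_surjective (ZMod 2) L),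
      AddSubgroup.card_top, Nat.card_zmod]
  have h1 := AddSubgroup.card_mul_index (artinSchreier (L := L)).ker
  have h2 := AddSubgroup.card_mul_index (Algebra.trace (ZMod 2) L).toAddMonoidHom.ker
  rw [AddSubgroup.index_ker, hker] at h1
  rw [AddSubgroup.index_ker, hrange] at h2
  omega

theorem exists_sq_add_self_eq_iff (d : L) :
    (∃ y, y ^ 2 + y = d) ↔ Algebra.trace (ZMod 2) L d = 0 := by
  rw [← LinearMap.toAddMonoidHom_coe, ← AddMonoidHom.mem_ker, ← range_artinSchreier]
  rfl

variable [Fintype L]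

theorem card_sq_add_self_eq (d : L) :
    #{y | y ^ 2 + y = d} = if Algebra.trace (ZMod 2) L d = 0 then 2 else 0 := by
  have := charP_two_of_algebra (L := L)
  split_ifs with hd
  · obtain ⟨y₀, rfl⟩ := (exists_sq_add_self_eq_iff d).mpr hd
    have hsol (y : L) : y ^ 2 + y = y₀ ^ 2 + y₀ ↔ y = y₀ ∨ y = y₀ + 1 := by
      rw [← CharTwo.add_eq_zero, show y ^ 2 + y + (y₀ ^ 2 + y₀) = (y + y₀) * (y + (y₀ + 1)) by
        linear_combination (-y * y₀) * CharTwo.two_eq_zero (R := L)]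
      simp only [mul_eq_zero, CharTwo.add_eq_zero]
    rw [show ({y | y ^ 2 + y = y₀ ^ 2 + y₀} : Finset L) = {y₀, y₀ + 1} by ext; simp [hsol],
      card_pair (by simp)]
  · rw [card_eq_zero, filter_eq_empty_iff]
    exact fun y _ hy => hd ((exists_sq_add_self_eq_iff d).mp ⟨y, hy⟩)

theorem card_add_inv_add_one_eq (β : L) :
    #{a : L | a ≠ 0 ∧ a + a⁻¹ + 1 = β} =
      if β = 1 then 1 else if Algebra.trace (ZMod 2) L (β - 1)⁻¹ = 0 then 2 else 0 := by
  have := charP_two_of_algebra (L := L)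
  simp only [add_inv_add_one_eq_iff]
  by_cases hβ : β = 1
  · subst hβ
    have hsol (a : L) : a ^ 2 - (1 - 1) * a + 1 = 0 ↔ a = 1 := by
      rw [show a ^ 2 - (1 - 1) * a + 1 = (a + 1) ^ 2 by rw [CharTwo.add_sq]; ring, sq_eq_zero_iff,
        CharTwo.add_eq_zero]
    rw [if_pos rfl, filter_congr fun a _ => hsol a, card_eq_one]
    exact ⟨1, by ext; simp⟩
  have hc : β - 1 ≠ 0 := sub_ne_zero.mpr hβ
  rw [if_neg hβ, ← trace_sq, ← card_sq_add_self_eq]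
  refine (card_equiv (Equiv.mulLeft₀ _ hc) fun y => ?_).symm
  simp only [mem_filter, mem_univ, true_and, Equiv.mulLeft₀_apply]
  constructor <;> intro h
  · field_simp at h ⊢
    linear_combination h + (1 - y * (β - 1) ^ 2) * CharTwo.two_eq_zero (R := L)
  · field_simp at h ⊢
    linear_combination h + ((β - 1) ^ 2 * y - 1) * CharTwo.two_eq_zero (R := L)

end FiniteField

section Blocks

variable {α : Type} {n : ℕ}

theorem blk_mul [CommSemiring α] (A B C D : Matrix (Fin n) (Fin n) α) (g h e f : Fin n → α) (c : α)
    (A' B' C' D' : Matrix (Fin n) (Fin n) α) (g' h' e' f' : Fin n → α) (c' : α) :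
    blk A B C D g h e f c * blk A' B' C' D' g' h' e' f' c' =
      blk (A * A' + B * C' + vecMulVec e g') (A * B' + B * D' + vecMulVec e h')
        (C * A' + D * C' + vecMulVec f g') (C * B' + D * D' + vecMulVec f h')
        (g ᵥ* A' + h ᵥ* C' + c • g') (g ᵥ* B' + h ᵥ* D' + c • h')
        (A *ᵥ e' + B *ᵥ f' + c' • e) (C *ᵥ e' + D *ᵥ f' + c' • f)
        (g ⬝ᵥ e' + h ⬝ᵥ f' + c * c') := by
  ext (i | i | i) (j | j | j) <;>
    simp [blk, mul_apply, Fintype.sum_sum_type, vecMulVec, vecMul, mulVec, dotProduct] <;> ring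

theorem trace_blk [AddCommMonoid α] (A B C D : Matrix (Fin n) (Fin n) α) (g h e f : Fin n → α)
    (c : α) : trace (blk A B C D g h e f c) = trace A + trace D + c := by
  simp [trace, Fintype.sum_sum_type, blk, add_assoc]

theorem blk_one [Zero α] [One α] : (blk 1 0 0 1 0 0 0 0 1 : Matrix (Idx n) (Idx n) α) = 1 := by
  ext (i | i | i) (j | j | j) <;> simp [blk, one_apply]

theorem blk_levi_mul_blk_unipotent [CommSemiring α] (A B D : Matrix (Fin n) (Fin n) α)
    (h : Fin n → α) :
    blk A 0 0 D 0 0 0 0 1 * blk 1 B 0 1 0 h 0 0 1 = blk A (A * B) 0 D 0 h 0 0 1 := by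
  rw [blk_mul]
  simp

theorem isAlt_zero [Zero α] : IsAlt (0 : Matrix (Fin n) (Fin n) α) :=
  ⟨transpose_zero, fun _ => rfl⟩

end Blocks

section Parabolic

variable {r n : ℕ}

theorem sigmaMat_eq_blk (k : ℕ) :
    sigmaMat r n k =
      blk (diagonal fun i => if k ≤ (i : ℕ) then 1 else 0)
        (diagonal fun i => if (i : ℕ) < k then 1 else 0)
        (diagonal fun i => if (i : ℕ) < k then 1 else 0)
        (diagonal fun i => if k ≤ (i : ℕ) then 1 else 0) 0 0 0 0 1 := by
  have hdiag (p : Fin n → Prop) [DecidablePred p] :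
      (of fun i j => if i = j ∧ p i then (1 : Fq r) else 0) =
        diagonal fun i => if p i then 1 else 0 := by
    ext i j
    by_cases hij : i = j <;> simp [diagonal, hij]
  rw [sigmaMat, hdiag, hdiag]

theorem sigmaMat_zero : sigmaMat r n 0 = 1 := by
  simp [sigmaMat_eq_blk, blk_one]

theorem mem_Pgrp_of_isAlt {A B : Matrix (Fin n) (Fin n) (Fq r)} {h : Fin n → Fq r}
    (hA : IsUnit A) (hB : IsAlt (B + vecMulVec h h)) :
    blk A (A * B) 0 (A⁻¹)ᵀ 0 h 0 0 1 ∈ Pgrp r n :=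
  ⟨A, B, h, hA, hB, (blk_levi_mul_blk_unipotent _ _ _ _).symm⟩

theorem one_mem_Pgrp : (1 : Matrix (Idx n) (Idx n) (Fq r)) ∈ Pgrp r n := by
  simpa [blk_one] using mem_Pgrp_of_isAlt (B := 0) (h := 0) isUnit_one (by simpa using isAlt_zero)

theorem unipotent_mem_Pgrp (h : Fin n → Fq r) :
    blk 1 (vecMulVec h h) 0 1 0 h 0 0 1 ∈ Pgrp r n := by
  have hB : vecMulVec h h + vecMulVec h h = 0 := by ext; exact CharTwo.add_self_eq_zero _
  simpa using mem_Pgrp_of_isAlt isUnit_one (hB ▸ isAlt_zero)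

theorem trace_sigmaMat_mul_unipotent (k : ℕ) (h : Fin n → Fq r) :
    trace (sigmaMat r n k * blk 1 (vecMulVec h h) 0 1 0 h 0 0 1) =
      (∑ i ∈ univ.filter fun i : Fin n => (i : ℕ) < k, h i ^ 2) + 1 := by
  set E : Matrix (Fin n) (Fin n) (Fq r) := diagonal fun i => if k ≤ (i : ℕ) then 1 else 0
  have hE : trace E + trace E = 0 := CharTwo.add_self_eq_zero _
  rw [sigmaMat_eq_blk, blk_mul, trace_blk]
  have hF : trace ((diagonal fun i : Fin n => if (i : ℕ) < k then 1 else 0) * vecMulVec h h) =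
      ∑ i ∈ univ.filter fun i : Fin n => (i : ℕ) < k, h i ^ 2 := by
    simp [trace, diagonal_mul, vecMulVec_apply, sum_filter, sq]
  simp only [mul_one, mul_zero, add_zero, zero_add, vecMulVec_zero, zero_vecMulVec,
    dotProduct_zero, trace_add, hF]
  linear_combination hE

theorem exists_mem_DCoset_trace_eq {k : ℕ} (hk : 0 < k) (hkn : k ≤ n) (β : Fq r) :
    ∃ w ∈ DCoset r n k, trace w = β := by
  obtain ⟨s, hs⟩ := FiniteField.isSquare_of_char_two (ringChar.eq (Fq r) 2) (β + 1)
  let i₀ : Fin n := ⟨0, hk.trans_le hkn⟩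
  refine ⟨1 * sigmaMat r n k * blk 1 (vecMulVec (Pi.single i₀ s) (Pi.single i₀ s)) 0 1 0
      (Pi.single i₀ s) 0 0 1, ⟨1, one_mem_Pgrp, _, unipotent_mem_Pgrp _, rfl⟩, ?_⟩
  rw [one_mul, trace_sigmaMat_mul_unipotent, sum_eq_single_of_mem i₀ (by simpa using hk)]
  · rw [Pi.single_eq_same, sq, ← hs]
    linear_combination CharTwo.two_eq_zero (R := Fq r)
  · intro i _ hi
    simp [hi]

theorem nBeta_pos (hn : 2 ≤ n) (β : Fq r) : 0 < nBeta r n β := by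
  obtain ⟨w, hw, hβ⟩ := exists_mem_DCoset_trace_eq (by omega : 0 < n - 1) (n.sub_le 1) β
  exact card_pos.mpr ⟨w, mem_filter.mpr ⟨(Set.Finite.mem_toFinset _).mpr hw, hβ⟩⟩

end Parabolic

theorem Matrix.inv_fin_one {K : Type*} [Field K] (A : Matrix (Fin 1) (Fin 1) K) :
    A⁻¹ = of fun _ _ => (A 0 0)⁻¹ := by
  ext i j
  fin_cases i; fin_cases j
  simp

section RankOne

variable {K : Type} [Field K]

/-- The element `[[a, 0, 0], [0, a⁻¹, 0], [0, 0, 1]] * [[1, h², 0], [0, 1, 0], [0, h, 1]]` of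
`P(3, q)`. -/
def pOne (a h : K) : Matrix (Idx 1) (Idx 1) K :=
  blk (of fun _ _ => a) (of fun _ _ => a * h ^ 2) 0 (of fun _ _ => a⁻¹) 0 (fun _ => h) 0 0 1

theorem trace_pOne (a h : K) : trace (pOne a h) = a + a⁻¹ + 1 := by
  simp [pOne, trace_blk, trace_fin_one]

theorem pOne_injective : Function.Injective fun p : K × K => pOne p.1 p.2 := by
  rintro ⟨a, h⟩ ⟨a', h'⟩ hp
  have ha := congrFun₂ hp (Sum.inl 0) (Sum.inl 0)
  have hh := congrFun₂ hp (Sum.inr (Sum.inr ())) (Sum.inr (Sum.inl 0))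
  simp only [pOne, blk, of_apply] at ha hh
  exact Prod.ext ha hh

theorem blk_eq_pOne {A B : Matrix (Fin 1) (Fin 1) K} {h : Fin 1 → K}
    (hB : B 0 0 = h 0 ^ 2) : blk A (A * B) 0 (A⁻¹)ᵀ 0 h 0 0 1 = pOne (A 0 0) (h 0) := by
  rw [pOne, inv_fin_one]
  congr 1 <;> (try ext) <;> simp [mul_apply, Subsingleton.elim _ (0 : Fin 1), hB]

theorem pOne_mul [CharP K 2] {a h a' h' : K} (ha' : a' ≠ 0) :
    pOne a h * pOne a' h' = pOne (a * a') (h * a'⁻¹ + h') := by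
  rw [pOne, pOne, blk_mul, pOne]
  congr 1 <;> (try ext) <;> simp [mul_apply, vecMul, dotProduct, mul_comm]
  field_simp
  linear_combination (-a * a' * h * h') * CharTwo.two_eq_zero (R := K)

end RankOne

section RankOneParabolic

variable {r : ℕ}

theorem mem_Pgrp_one_iff {w : Matrix (Idx 1) (Idx 1) (Fq r)} :
    w ∈ Pgrp r 1 ↔ ∃ a h : Fq r, a ≠ 0 ∧ w = pOne a h := by
  constructor
  · rintro ⟨A, B, h, hA, hB, rfl⟩
    have hB₀ : B 0 0 = h 0 ^ 2 := by
      have := hB.2 0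
      simp only [Matrix.add_apply, of_apply] at this
      rw [sq, ← CharTwo.add_eq_zero, this]
    rw [blk_levi_mul_blk_unipotent, blk_eq_pOne hB₀]
    refine ⟨A 0 0, h 0, ?_, rfl⟩
    simpa [isUnit_iff_isUnit_det, det_fin_one] using hA
  · rintro ⟨a, h, ha, rfl⟩
    have hA : IsUnit (of fun _ _ => a : Matrix (Fin 1) (Fin 1) (Fq r)) := by
      rw [isUnit_iff_isUnit_det, det_fin_one, of_apply]
      exact ha.isUnit
    have hB : IsAlt ((of fun _ _ => h ^ 2 : Matrix (Fin 1) (Fin 1) (Fq r)) +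
        vecMulVec (fun _ => h) fun _ => h) :=
      ⟨by ext; rfl, fun _ => by simp [sq, vecMulVec_apply, CharTwo.add_self_eq_zero]⟩
    simpa only [blk_eq_pOne (B := of fun _ _ => h ^ 2) (h := fun _ => h) rfl, of_apply] using
      mem_Pgrp_of_isAlt hA hB

theorem DCoset_one_zero : DCoset r 1 0 = Pgrp r 1 := by
  ext w
  constructor
  · rintro ⟨p, hp, p', hp', rfl⟩
    obtain ⟨a, h, ha, rfl⟩ := mem_Pgrp_one_iff.mp hp
    obtain ⟨a', h', ha', rfl⟩ := mem_Pgrp_one_iff.mp hp'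
    rw [sigmaMat_zero, mul_one, pOne_mul ha']
    exact mem_Pgrp_one_iff.mpr ⟨_, _, mul_ne_zero ha ha', rfl⟩
  · intro hw
    exact ⟨w, hw, 1, one_mem_Pgrp, by rw [sigmaMat_zero, mul_one, mul_one]⟩

theorem nBeta_one (β : Fq r) :
    nBeta r 1 β = #{a : Fq r | a ≠ 0 ∧ a + a⁻¹ + 1 = β} * Fintype.card (Fq r) := by
  have hfilter : (DCfin r 1).filter (fun w => trace w = β) =
      (({a : Fq r | a ≠ 0 ∧ a + a⁻¹ + 1 = β} : Finset (Fq r)) ×ˢ univ).image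
        fun p => pOne p.1 p.2 := by
    ext w
    simp only [DCfin, PsPfin, Nat.sub_self, DCoset_one_zero, mem_filter, Set.Finite.mem_toFinset,
      mem_Pgrp_one_iff, mem_image, mem_product, mem_univ, and_true, true_and, Prod.exists]
    constructor
    · rintro ⟨⟨a, h, ha, rfl⟩, rfl⟩
      exact ⟨a, h, ⟨ha, (trace_pOne a h).symm⟩, rfl⟩
    · rintro ⟨a, h, ⟨ha, rfl⟩, rfl⟩
      exact ⟨⟨a, h, ha, rfl⟩, trace_pOne a h⟩
  rw [nBeta, hfilter, card_image_of_injective _ pOne_injective, card_product, card_univ]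

end RankOneParabolic

/-- For `q = 2^r`: for each odd `n ≥ 3`, `n(β) > 0` for every `β`; and for `n = 1`,
`n(β) = q` if `β = 1`, `n(β) = 2q` if `β ≠ 1` and `tr((β-1)⁻¹) = 0`, and `n(β) = 0`
if `β ≠ 1` and `tr((β-1)⁻¹) = 1`. -/
theorem stmt_4 (r : ℕ) (hr : 1 ≤ r) :
    (∀ n : ℕ, Odd n → 3 ≤ n → ∀ β : Fq r, 0 < nBeta r n β) ∧
    (∀ β : Fq r, nBeta r 1 β =
      if β = 1 then 2 ^ r
      else if tr2 r (β - 1)⁻¹ = 0 then 2 * 2 ^ r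
      else 0) := by
  refine ⟨fun n _ hn β => nBeta_pos (by omega) β, fun β => ?_⟩
  rw [nBeta_one, FiniteField.card_add_inv_add_one_eq, Fintype.card_eq_nat_card,
    GaloisField.card 2 r (by omega), tr2]
  split_ifs <;> ring
end
end

section
/- Let $q=2^r$ with $r\geq 1$, let $\lambda$ be the canonical additive character of $\mathbb{F}_q$, and let $\beta\in\mathbb{F}_q^*$. Then $\sum_{\alpha\in\mathbb{F}_q\setminus\{0,1\}}\lambda\big(\beta/(\alpha^2+\alpha)\big) = K(\lambda;\beta)-1$. -/
/-! In characteristic 2, `y² + y = x² + x` iff `y ∈ {x, x + 1}`, and `tr(x² + x) = 0` because the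
trace is Frobenius-invariant. So `γ` has at most `1 + λ(γ)` preimages under `x ↦ x² + x`, with
equality everywhere since both counts total `q` (as `∑ λ = 0`). Hence
`∑_α f(α² + α) = ∑_γ (1 + λ(γ)) f(γ)`. For `f(γ) = λ(β/γ)` the part `∑_γ λ(β/γ)` vanishes because
`γ ↦ β/γ` permutes `F_q`, and `∑_γ λ(γ) λ(β/γ) = ∑_γ λ(γ + β/γ)` is the Kloosterman sum. -/

open scoped BigOperators Classical
open Matrix

noncomputable section

/-- The canonical additive character `λ(x) = (-1)^{tr x}`, with values in `ℤ`. -/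
noncomputable def lam (r : ℕ) (x : Fq r) : ℤ := if tr2 r x = 0 then 1 else -1

/-- The Kloosterman sum `K(λ; a) = ∑_{α ≠ 0} λ(α + a α⁻¹)`. -/
noncomputable def Kl (r : ℕ) (a : Fq r) : ℤ :=
  ∑ α ∈ Finset.univ.filter (fun α : Fq r => α ≠ 0), lam r (α + a * α⁻¹)

open Finset

section CharTwo

variable {F : Type*} [Field F]

theorem sq_add_self_eq_sq_add_self_iff [CharP F 2] {x y : F} :
    y ^ 2 + y = x ^ 2 + x ↔ y = x ∨ y = x + 1 := by
  have key : y ^ 2 + y - (x ^ 2 + x) = (y - x) * (y - (x + 1)) := by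
    linear_combination (y - x ^ 2 + x * y - x) * CharTwo.two_eq_zero (R := F)
  rw [← sub_eq_zero, key, mul_eq_zero, sub_eq_zero, sub_eq_zero]

theorem card_filter_sq_add_self_eq_le_two [Fintype F] [CharP F 2] (γ : F) :
    #{x | x ^ 2 + x = γ} ≤ 2 := by
  rcases (filter (fun x : F => x ^ 2 + x = γ) univ).eq_empty_or_nonempty with hempty | ⟨x₀, hx₀⟩
  · simp [hempty]
  · refine (card_le_card fun y hy => ?_).trans (card_le_two (a := x₀) (b := x₀ + 1))
    rw [mem_filter] at hx₀ hy
    simpa [← hx₀.2, sq_add_self_eq_sq_add_self_iff] using hy.2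

theorem Algebra.trace_sq_add_self [Finite F] [Algebra (ZMod 2) F] (x : F) :
    Algebra.trace (ZMod 2) F (x ^ 2 + x) = 0 := by
  have hfrob := Algebra.trace_eq_of_algEquiv (FiniteField.frobeniusAlgEquivOfAlgebraic (ZMod 2) F) x
  rw [FiniteField.coe_frobeniusAlgEquivOfAlgebraic, ZMod.card] at hfrob
  rw [map_add, hfrob, CharTwo.add_self_eq_zero]

end CharTwo

section Fq

variable {r : ℕ}

theorem lam_zero : lam r 0 = 1 := by simp [lam, tr2]

theorem lam_add (x y : Fq r) : lam r (x + y) = lam r x * lam r y := by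
  have htr : tr2 r (x + y) = tr2 r x + tr2 r y := map_add _ x y
  have hbit : ∀ a : ZMod 2, a = 0 ∨ a = 1 := by decide
  rcases hbit (tr2 r x) with hx | hx <;> rcases hbit (tr2 r y) with hy | hy <;>
    simp [lam, htr, hx, hy, CharTwo.add_self_eq_zero]

theorem sum_lam_eq_zero : ∑ x : Fq r, lam r x = 0 := by
  obtain ⟨c, hc⟩ := Algebra.trace_surjective (ZMod 2) (Fq r) 1
  have hlam_c : lam r c = -1 := by simp [lam, tr2, hc]
  have hshift : ∑ x, lam r x = -∑ x, lam r x := calc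
    ∑ x, lam r x = ∑ x, lam r (x + c) := (Equiv.sum_comp (Equiv.addRight c) _).symm
    _ = -∑ x, lam r x := by simp [lam_add, hlam_c]
  linarith

theorem card_filter_sq_add_self_eq (γ : Fq r) :
    (#{x | x ^ 2 + x = γ} : ℤ) = 1 + lam r γ := by
  have hle : ∀ γ : Fq r, (#{x | x ^ 2 + x = γ} : ℤ) ≤ 1 + lam r γ := by
    intro γ
    by_cases h : tr2 r γ = 0
    · simp only [lam, h, if_true]
      exact_mod_cast card_filter_sq_add_self_eq_le_two γ
    · have hempty : #{x | x ^ 2 + x = γ} = 0 := card_eq_zero.2 <|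
        filter_eq_empty_iff.2 fun x _ hx => h (hx ▸ Algebra.trace_sq_add_self x)
      simp [lam, h, hempty]
  have hsum : ∑ γ : Fq r, (#{x | x ^ 2 + x = γ} : ℤ) = ∑ γ, (1 + lam r γ) := by
    rw [sum_add_distrib, sum_lam_eq_zero, ← Nat.cast_sum,
      ← card_eq_sum_card_fiberwise (f := fun x : Fq r => x ^ 2 + x) fun _ _ => mem_univ _]
    simp
  exact (sum_eq_sum_iff_of_le fun γ _ => hle γ).1 hsum γ (mem_univ γ)

theorem sum_comp_sq_add_self (f : Fq r → ℤ) :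
    ∑ x, f (x ^ 2 + x) = ∑ γ, (1 + lam r γ) * f γ := by
  rw [← sum_fiberwise' univ (fun x => x ^ 2 + x) f]
  simp only [sum_const, nsmul_eq_mul, card_filter_sq_add_self_eq]

end Fq

theorem stmt_13_general (r : ℕ) (β : Fq r) (hβ : β ≠ 0) :
    ∑ α ∈ Finset.univ.filter (fun α : Fq r => α ≠ 0 ∧ α ≠ 1),
      lam r (β / (α ^ 2 + α)) = Kl r β - 1 := by
  -- Both sides are extended to all of `F_q` using `0⁻¹ = 0`: this adds `λ(0) = 1` at `α = 0, 1`
  -- on the left and at `γ = 0` in the Kloosterman sum.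
  have hleft : ∑ α, lam r (β * (α ^ 2 + α)⁻¹) =
      ∑ α ∈ univ.filter (fun α : Fq r => α ≠ 0 ∧ α ≠ 1), lam r (β / (α ^ 2 + α)) + 2 := by
    rw [← sum_filter_add_sum_filter_not univ (fun α : Fq r => α ≠ 0 ∧ α ≠ 1)]
    have hdeg : univ.filter (fun α : Fq r => ¬(α ≠ 0 ∧ α ≠ 1)) = {0, 1} := by
      ext α
      simp only [mem_filter, mem_univ, true_and, mem_insert, mem_singleton]
      tauto
    rw [hdeg, sum_pair zero_ne_one]
    simp [div_eq_mul_inv, lam_zero, CharTwo.add_self_eq_zero]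
  have hright : ∑ γ, lam r (γ + β * γ⁻¹) = Kl r β + 1 := by
    rw [Kl, filter_ne', ← add_sum_erase _ _ (mem_univ 0)]
    simp [lam_zero, add_comm]
  have hinv : ∑ γ, lam r (β * γ⁻¹) = 0 := by
    rw [← sum_lam_eq_zero]
    exact Fintype.sum_equiv ((Equiv.inv _).trans (Equiv.mulLeft₀ β hβ)) _ _ fun _ => rfl
  have hcomp := sum_comp_sq_add_self (fun γ => lam r (β * γ⁻¹))
  simp only [add_mul, one_mul, ← lam_add, sum_add_distrib, hinv, hright, hleft] at hcomp
  linarith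

/-- For `q = 2^r` and `β ∈ F_q^*`:
`∑_{α ∈ F_q \ {0,1}} λ(β/(α² + α)) = K(λ; β) - 1`. -/
theorem stmt_13 (r : ℕ) (hr : 1 ≤ r) (β : Fq r) (hβ : β ≠ 0) :
    ∑ α ∈ Finset.univ.filter (fun α : Fq r => α ≠ 0 ∧ α ≠ 1),
      lam r (β / (α ^ 2 + α)) = Kl r β - 1 :=
  stmt_13_general r β hβ
end
end
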